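/- arXiv:1811.02540 — 8 statements merged into one kernel-verified Lean document; each statement's English description precedes it below -/
import Mathlib

section
/- Let X and Y be nonempty convex compact subsets of a finite-dimensional real inner product space E, let ℓ^1,…,ℓ^T : E → ℝ be linear functions, and let Δ² = {(λ1,λ2) ∈ ℝ²_{≥0} : λ1+λ2 = 1}. Given decisions λ^t ∈ Δ², x^t ∈ X, y^t ∈ Y for t = 1,…,T, define the local regrets R_X^T = Σ_t ℓ^t(x^t) − min_{x̂∈X} Σ_t ℓ^t(x̂), R_Y^T = Σ_t ℓ^t(y^t) − min_{ŷ∈Y} Σ_t ℓ^t(ŷ), and the simplex regret R_{Δ²}^T = Σ_t (λ1^t ℓ^t(x^t) + λ2^t ℓ^t(y^t)) − min_{λ̂∈Δ²} Σ_t (λ̂1 ℓ^t(x^t) + λ̂2 ℓ^t(y^t)). Then the regret on the convex hull co{X,Y} of the composite decisions λ1^t x^t + λ2^t y^t satisfies: Σ_{t=1}^T ℓ^t(λ1^t x^t + λ2^t y^t) − min_{ẑ ∈ co{X,Y}} Σ_{t=1}^T ℓ^t(ẑ) ≤ R_{Δ²}^T + max{ R_X^T, R_Y^T }. -/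
open RealInnerProductSpace

/-- The two-dimensional simplex Δ². -/
def simplexTwo : Set (ℝ × ℝ) := {p : ℝ × ℝ | 0 ≤ p.1 ∧ 0 ≤ p.2 ∧ p.1 + p.2 = 1}

/-- The convex hull co{X, Y} of two sets. -/
def coHull {E : Type*} [NormedAddCommGroup E] [InnerProductSpace ℝ E] (X Y : Set E) : Set E :=
  {z : E | ∃ x ∈ X, ∃ y ∈ Y, ∃ p ∈ simplexTwo, z = p.1 • x + p.2 • y}

/-!
With `L = ∑ t, ℓ t`, linearity makes the loss of the composite decisions equal to the loss of the
simplex player, so only the comparators have to be compared. A linear function on `Δ²` is least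
at a vertex, so the simplex comparator is `min (∑ t, ℓ t (x t)) (∑ t, ℓ t (y t))`; on `co{X, Y}`,
`L` takes convex combinations of its values on `X` and `Y`, so it is at least
`min (inf_X L) (inf_Y L)`. The two are linked by `min a b - max (a - c) (b - d) ≤ min c d`.
-/

theorem one_zero_mem_simplexTwo : ((1 : ℝ), (0 : ℝ)) ∈ simplexTwo := by
  norm_num [simplexTwo]

theorem zero_one_mem_simplexTwo : ((0 : ℝ), (1 : ℝ)) ∈ simplexTwo := by
  norm_num [simplexTwo]

theorem min_le_combo_of_mem_simplexTwo {p : ℝ × ℝ} (hp : p ∈ simplexTwo) (a b : ℝ) :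
    min a b ≤ p.1 * a + p.2 * b := by
  obtain ⟨hp₁, hp₂, hsum⟩ := hp
  calc min a b = p.1 * min a b + p.2 * min a b := by rw [← add_mul, hsum, one_mul]
    _ ≤ p.1 * a + p.2 * b := by gcongr <;> simp

theorem isLeast_image_simplexTwo (a b : ℝ) :
    IsLeast ((fun p : ℝ × ℝ => p.1 * a + p.2 * b) '' simplexTwo) (min a b) := by
  refine ⟨?_, ?_⟩
  · rcases min_choice a b with h | h <;> rw [h]
    · exact ⟨_, one_zero_mem_simplexTwo, by simp⟩
    · exact ⟨_, zero_one_mem_simplexTwo, by simp⟩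
  · rintro _ ⟨p, hp, rfl⟩
    exact min_le_combo_of_mem_simplexTwo hp a b

theorem csInf_image_simplexTwo (a b : ℝ) :
    sInf ((fun p : ℝ × ℝ => p.1 * a + p.2 * b) '' simplexTwo) = min a b :=
  (isLeast_image_simplexTwo a b).csInf_eq

theorem min_csInf_le_csInf_image_coHull {E : Type*} [NormedAddCommGroup E]
    [InnerProductSpace ℝ E] {X Y : Set E} (hXne : X.Nonempty) (hYne : Y.Nonempty)
    (f : E →ₗ[ℝ] ℝ) (hXbdd : BddBelow (f '' X)) (hYbdd : BddBelow (f '' Y)) :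
    min (sInf (f '' X)) (sInf (f '' Y)) ≤ sInf (f '' coHull X Y) := by
  obtain ⟨x₀, hx₀⟩ := hXne
  obtain ⟨y₀, hy₀⟩ := hYne
  refine le_csInf ⟨_, _, ⟨x₀, hx₀, y₀, hy₀, _, one_zero_mem_simplexTwo, rfl⟩, rfl⟩ ?_
  rintro _ ⟨_, ⟨x, hx, y, hy, p, hp, rfl⟩, rfl⟩
  calc min (sInf (f '' X)) (sInf (f '' Y))
      ≤ p.1 * sInf (f '' X) + p.2 * sInf (f '' Y) := min_le_combo_of_mem_simplexTwo hp _ _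
    _ ≤ p.1 * f x + p.2 * f y := by
        have hfx := csInf_le hXbdd (Set.mem_image_of_mem f hx)
        have hfy := csInf_le hYbdd (Set.mem_image_of_mem f hy)
        obtain ⟨hp₁, hp₂, -⟩ := hp
        gcongr
    _ = f (p.1 • x + p.2 • y) := by simp

theorem min_sub_max_sub_le_min (a b c d : ℝ) : min a b - max (a - c) (b - d) ≤ min c d := by
  refine le_min ?_ ?_
  · linarith [min_le_left a b, le_max_left (a - c) (b - d)]
  · linarith [min_le_right a b, le_max_right (a - c) (b - d)]

theorem regret_convex_hull_general
    {E : Type*} [NormedAddCommGroup E] [InnerProductSpace ℝ E] [FiniteDimensional ℝ E]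
    (X Y : Set E)
    (hXne : X.Nonempty) (hXcomp : IsCompact X)
    (hYne : Y.Nonempty) (hYcomp : IsCompact Y)
    (T : ℕ) (ℓ : Fin T → E →ₗ[ℝ] ℝ)
    (lam : Fin T → ℝ × ℝ)
    (x y : Fin T → E) :
    (∑ t, ℓ t ((lam t).1 • x t + (lam t).2 • y t))
        - sInf ((fun z => ∑ t, ℓ t z) '' coHull X Y)
      ≤ ((∑ t, ((lam t).1 * ℓ t (x t) + (lam t).2 * ℓ t (y t)))
            - sInf ((fun p => ∑ t, (p.1 * ℓ t (x t) + p.2 * ℓ t (y t))) '' simplexTwo))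
        + max ((∑ t, ℓ t (x t)) - sInf ((fun x' => ∑ t, ℓ t x') '' X))
              ((∑ t, ℓ t (y t)) - sInf ((fun y' => ∑ t, ℓ t y') '' Y)) := by
  set L : E →ₗ[ℝ] ℝ := ∑ t, ℓ t
  set A := ∑ t, ℓ t (x t)
  set B := ∑ t, ℓ t (y t)
  have hL : (fun z => ∑ t, ℓ t z) = L := by ext; simp [L]
  have hdecisions : ∑ t, ℓ t ((lam t).1 • x t + (lam t).2 • y t)
      = ∑ t, ((lam t).1 * ℓ t (x t) + (lam t).2 * ℓ t (y t)) := by simp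
  have hsimplex : (fun p : ℝ × ℝ => ∑ t, (p.1 * ℓ t (x t) + p.2 * ℓ t (y t)))
      = fun p => p.1 * A + p.2 * B := by
    ext; simp [A, B, Finset.sum_add_distrib, Finset.mul_sum]
  have hbdd {S : Set E} (hS : IsCompact S) : BddBelow (L '' S) :=
    (hS.image L.continuous_of_finiteDimensional).bddBelow
  have hhull := min_csInf_le_csInf_image_coHull hXne hYne L (hbdd hXcomp) (hbdd hYcomp)
  have hmin := min_sub_max_sub_le_min A B (sInf (L '' X)) (sInf (L '' Y))
  rw [hdecisions, hsimplex, csInf_image_simplexTwo, hL]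
  linarith

/-- The regret on the convex hull co{X,Y} of the composite decisions
λ1^t x^t + λ2^t y^t is at most the simplex regret plus the maximum of the two
local regrets. -/
theorem regret_convex_hull
    {E : Type*} [NormedAddCommGroup E] [InnerProductSpace ℝ E] [FiniteDimensional ℝ E]
    (X Y : Set E)
    (hXne : X.Nonempty) (hXconv : Convex ℝ X) (hXcomp : IsCompact X)
    (hYne : Y.Nonempty) (hYconv : Convex ℝ Y) (hYcomp : IsCompact Y)
    (T : ℕ) (ℓ : Fin T → E →ₗ[ℝ] ℝ)
    (lam : Fin T → ℝ × ℝ) (hlam : ∀ t, lam t ∈ simplexTwo)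
    (x y : Fin T → E) (hx : ∀ t, x t ∈ X) (hy : ∀ t, y t ∈ Y) :
    (∑ t, ℓ t ((lam t).1 • x t + (lam t).2 • y t))
        - sInf ((fun z => ∑ t, ℓ t z) '' coHull X Y)
      ≤ ((∑ t, ((lam t).1 * ℓ t (x t) + (lam t).2 * ℓ t (y t)))
            - sInf ((fun p => ∑ t, (p.1 * ℓ t (x t) + p.2 * ℓ t (y t))) '' simplexTwo))
        + max ((∑ t, ℓ t (x t)) - sInf ((fun x' => ∑ t, ℓ t x') '' X))
              ((∑ t, ℓ t (y t)) - sInf ((fun y' => ∑ t, ℓ t y') '' Y)) :=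
  regret_convex_hull_general X Y hXne hXcomp hYne hYcomp T ℓ lam x y
end

section
/- Let X_1,…,X_n be nonempty convex compact subsets of a finite-dimensional real inner product space E, let ℓ^1,…,ℓ^T : E → ℝ be linear functions, and let Δⁿ = {λ ∈ ℝⁿ_{≥0} : Σ_i λ_i = 1}. Given decisions λ^t ∈ Δⁿ and x_i^t ∈ X_i for each i and t, define the local regrets R_i^T = Σ_t ℓ^t(x_i^t) − min_{x̂∈X_i} Σ_t ℓ^t(x̂) and the simplex regret R_{Δⁿ}^T = Σ_t Σ_i λ_i^t ℓ^t(x_i^t) − min_{λ̂∈Δⁿ} Σ_t Σ_i λ̂_i ℓ^t(x_i^t). Then the regret on co{X_1,…,X_n} of the composite decisions Σ_i λ_i^t x_i^t satisfies: Σ_{t=1}^T ℓ^t(Σ_i λ_i^t x_i^t) − min_{ẑ ∈ co{X_1,…,X_n}} Σ_{t=1}^T ℓ^t(ẑ) ≤ R_{Δⁿ}^T + max_{1≤i≤n} R_i^T. -/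
open RealInnerProductSpace

/-- The n-dimensional simplex Δⁿ. -/
def simplexN (n : ℕ) : Set (Fin n → ℝ) := {lam | (∀ i, 0 ≤ lam i) ∧ ∑ i, lam i = 1}

/-- The convex hull co{X_1, …, X_n} of n sets. -/
def coHullN {E : Type*} [NormedAddCommGroup E] [InnerProductSpace ℝ E]
    {n : ℕ} (X : Fin n → Set E) : Set E :=
  {z : E | ∃ lam ∈ simplexN n, ∃ x : Fin n → E, (∀ i, x i ∈ X i) ∧ z = ∑ i, lam i • x i}

/-!
The cumulative loss `g = ∑ t, ℓ t` is linear. Write `S_i` for the loss of the `i`-th local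
learner, `m_i` for the best loss on `X_i` and `R_i = S_i - m_i`. A point `∑ i, c_i • y_i` of the
hull has loss `∑ i, c_i * g y_i ≥ ∑ i, c_i * m_i = ∑ i, c_i * S_i - ∑ i, c_i * R_i
≥ min_Δ (∑ i, c_i * S_i) - max_i R_i`, while by linearity the composite decisions incur exactly
the loss of the simplex decisions.
-/

open Finset

section Simplex

variable {n : ℕ}

theorem simplexN_eq_stdSimplex (n : ℕ) : simplexN n = stdSimplex ℝ (Fin n) := rfl

theorem sum_mul_le_iSup_of_mem_simplexN {c : Fin n → ℝ} (hc : c ∈ simplexN n)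
    (a : Fin n → ℝ) : ∑ i, c i * a i ≤ ⨆ i, a i :=
  calc ∑ i, c i * a i ≤ ∑ i, c i * ⨆ j, a j :=
        sum_le_sum fun i _ =>
          mul_le_mul_of_nonneg_left (le_ciSup (Set.finite_range a).bddAbove i) (hc.1 i)
    _ = ⨆ j, a j := by rw [← sum_mul, hc.2, one_mul]

theorem bddBelow_image_simplexN (a : Fin n → ℝ) :
    BddBelow ((fun c => ∑ i, c i * a i) '' simplexN n) :=
  simplexN_eq_stdSimplex n ▸ ((isCompact_stdSimplex ℝ (Fin n)).image (by fun_prop)).bddBelow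

end Simplex

section Hull

variable {E : Type*} [NormedAddCommGroup E] [InnerProductSpace ℝ E] {n : ℕ}
  {X : Fin n → Set E}

theorem coHullN_nonempty (hn : 0 < n) (hX : ∀ i, (X i).Nonempty) : (coHullN X).Nonempty :=
  ⟨_, Pi.single ⟨0, hn⟩ 1, simplexN_eq_stdSimplex n ▸ single_mem_stdSimplex ℝ _,
    fun i => (hX i).some, fun i => (hX i).some_mem, rfl⟩

theorem exists_sum_mul_sInf_le_of_mem_coHullN (g : E →ₗ[ℝ] ℝ)
    (hg : ∀ i, BddBelow (g '' X i)) {z : E} (hz : z ∈ coHullN X) :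
    ∃ c ∈ simplexN n, ∑ i, c i * sInf (g '' X i) ≤ g z := by
  obtain ⟨c, hc, y, hy, rfl⟩ := hz
  refine ⟨c, hc, ?_⟩
  rw [map_sum]
  exact sum_le_sum fun i _ => by
    rw [map_smul, smul_eq_mul]
    exact mul_le_mul_of_nonneg_left (csInf_le (hg i) ⟨y i, hy i, rfl⟩) (hc.1 i)

theorem sInf_image_simplexN_sub_iSup_le_sInf_image_coHullN (g : E →ₗ[ℝ] ℝ)
    (hg : ∀ i, BddBelow (g '' X i)) (hX : (coHullN X).Nonempty) (S : Fin n → ℝ) :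
    sInf ((fun c => ∑ i, c i * S i) '' simplexN n) - ⨆ i, (S i - sInf (g '' X i))
      ≤ sInf (g '' coHullN X) := by
  refine le_csInf (hX.image g) ?_
  rintro _ ⟨z, hz, rfl⟩
  obtain ⟨c, hc, hcz⟩ := exists_sum_mul_sInf_le_of_mem_coHullN g hg hz
  have hS : sInf ((fun c => ∑ i, c i * S i) '' simplexN n) ≤ ∑ i, c i * S i :=
    csInf_le (bddBelow_image_simplexN S) ⟨c, hc, rfl⟩
  have hR := sum_mul_le_iSup_of_mem_simplexN hc fun i => S i - sInf (g '' X i)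
  simp only [mul_sub, sum_sub_distrib] at hR
  linarith

end Hull

theorem regret_convex_hull_n_general
    {E : Type*} [NormedAddCommGroup E] [InnerProductSpace ℝ E] [FiniteDimensional ℝ E]
    (n : ℕ) (hn : 0 < n) (X : Fin n → Set E)
    (hXne : ∀ i, (X i).Nonempty)
    (hXcomp : ∀ i, IsCompact (X i))
    (T : ℕ) (ℓ : Fin T → E →ₗ[ℝ] ℝ)
    (lam : Fin T → Fin n → ℝ)
    (x : Fin T → Fin n → E) :
    (∑ t, ℓ t (∑ i, lam t i • x t i))
        - sInf ((fun z => ∑ t, ℓ t z) '' coHullN X)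
      ≤ ((∑ t, ∑ i, lam t i * ℓ t (x t i))
            - sInf ((fun lam' => ∑ t, ∑ i, lam' i * ℓ t (x t i)) '' simplexN n))
        + ⨆ i, ((∑ t, ℓ t (x t i)) - sInf ((fun x' => ∑ t, ℓ t x') '' X i)) := by
  set g : E →ₗ[ℝ] ℝ := ∑ t, ℓ t
  have hg : (fun z => ∑ t, ℓ t z) = g := by ext; simp [g]
  have hbdd (i : Fin n) : BddBelow (g '' X i) :=
    ((hXcomp i).image g.continuous_of_finiteDimensional).bddBelow
  have hplay : ∑ t, ℓ t (∑ i, lam t i • x t i) = ∑ t, ∑ i, lam t i * ℓ t (x t i) := by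
    simp
  have hswap : (fun c : Fin n → ℝ => ∑ t, ∑ i, c i * ℓ t (x t i))
      = fun c => ∑ i, c i * ∑ t, ℓ t (x t i) := by
    ext c; rw [sum_comm]; simp only [mul_sum]
  have key := sInf_image_simplexN_sub_iSup_le_sInf_image_coHullN g hbdd
    (coHullN_nonempty hn hXne) fun i => ∑ t, ℓ t (x t i)
  rw [hplay, hswap, hg]
  linarith

/-- The regret on co{X_1,…,X_n} of the composite decisions Σ_i λ_i^t x_i^t
is at most the simplex regret plus the maximum of the n local regrets. -/
theorem regret_convex_hull_n
    {E : Type*} [NormedAddCommGroup E] [InnerProductSpace ℝ E] [FiniteDimensional ℝ E]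
    (n : ℕ) (hn : 0 < n) (X : Fin n → Set E)
    (hXne : ∀ i, (X i).Nonempty) (hXconv : ∀ i, Convex ℝ (X i))
    (hXcomp : ∀ i, IsCompact (X i))
    (T : ℕ) (ℓ : Fin T → E →ₗ[ℝ] ℝ)
    (lam : Fin T → Fin n → ℝ) (hlam : ∀ t, lam t ∈ simplexN n)
    (x : Fin T → Fin n → E) (hx : ∀ t i, x t i ∈ X i) :
    (∑ t, ℓ t (∑ i, lam t i • x t i))
        - sInf ((fun z => ∑ t, ℓ t z) '' coHullN X)
      ≤ ((∑ t, ∑ i, lam t i * ℓ t (x t i))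
            - sInf ((fun lam' => ∑ t, ∑ i, lam' i * ℓ t (x t i)) '' simplexN n))
        + ⨆ i, ((∑ t, ℓ t (x t i)) - sInf ((fun x' => ∑ t, ℓ t x') '' X i)) :=
  regret_convex_hull_n_general n hn X hXne hXcomp T ℓ lam x
end

section
/- Let X be a nonempty convex compact subset of a finite-dimensional real inner product space E, let g : E → ℝ be a convex function such that X_g := X ∩ {x : g(x) ≤ 0} is nonempty, let ℓ^1,…,ℓ^T : E → ℝ be linear functions, let x^1,…,x^T ∈ X, let β^1,…,β^T ≥ 0, and for each t let s^t be a subgradient of g at x^t. Define β_⋄^t = β^t if g(x^t) > 0 and β_⋄^t = 0 otherwise, and the penalized linear losses ℓ̃_⋄^t(x) = ℓ^t(x) + β_⋄^t ⟨s^t, x⟩. Then the regret with respect to the penalized losses satisfies: Σ_{t=1}^T ℓ̃_⋄^t(x^t) − min_{x̂ ∈ X} Σ_{t=1}^T ℓ̃_⋄^t(x̂) ≥ (Σ_{t=1}^T ℓ^t(x^t) − min_{x̂ ∈ X_g} Σ_{t=1}^T ℓ^t(x̂)) + Σ_{t : g(x^t) > 0} β^t g(x^t). -/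
/-! For a feasible `y` (`y ∈ X`, `g y ≤ 0`) the subgradient inequality gives
`⟪s^t, y⟫ ≤ ⟪s^t, x^t⟫ - g (x^t)`, so the penalized loss at `y` is at most the plain loss at `y`
plus `∑ β_⋄^t (⟪s^t, x^t⟫ - g (x^t))`. Bounding the infimum over `X` by the value at `y` and then
taking the infimum over feasible `y` gives the claim; compactness of `X` makes the first infimum
a genuine lower bound. -/

open RealInnerProductSpace

theorem csInf_image_le_csInf_image_add {α : Type*} {X A : Set α} {F L : α → ℝ} {c : ℝ}
    (hF : BddBelow (F '' X)) (hA : A.Nonempty) (hAX : A ⊆ X) (hle : ∀ y ∈ A, F y ≤ L y + c) :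
    sInf (F '' X) ≤ sInf (L '' A) + c := by
  rw [← sub_le_iff_le_add]
  refine le_csInf (hA.image L) ?_
  rintro _ ⟨y, hy, rfl⟩
  linarith [csInf_le hF ⟨y, hAX hy, rfl⟩, hle y hy]

theorem inner_le_inner_sub_of_subgradient {E : Type*} [NormedAddCommGroup E]
    [InnerProductSpace ℝ E] {g : E → ℝ} {x y s : E} (hs : g y ≥ g x + ⟪s, y - x⟫)
    (hy : g y ≤ 0) : ⟪s, y⟫ ≤ ⟪s, x⟫ - g x := by
  rw [inner_sub_right] at hs
  linarith

theorem sum_mul_inner_le_of_subgradient {E ι : Type*} [NormedAddCommGroup E]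
    [InnerProductSpace ℝ E] (I : Finset ι) {g : E → ℝ} {x s : ι → E} {w : ι → ℝ} {y : E}
    (hw : ∀ t, 0 ≤ w t) (hs : ∀ t, ∀ z : E, g z ≥ g (x t) + ⟪s t, z - x t⟫) (hy : g y ≤ 0) :
    ∑ t ∈ I, w t * ⟪s t, y⟫ ≤ ∑ t ∈ I, w t * (⟪s t, x t⟫ - g (x t)) :=
  Finset.sum_le_sum fun t _ =>
    mul_le_mul_of_nonneg_left (inner_le_inner_sub_of_subgradient (hs t y) hy) (hw t)

theorem lagrangian_relaxation_regret_lower_bound_general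
    {E : Type*} [NormedAddCommGroup E] [InnerProductSpace ℝ E] [FiniteDimensional ℝ E]
    (X : Set E) (hXcomp : IsCompact X)
    (g : E → ℝ)
    (hXg : (X ∩ {x | g x ≤ 0}).Nonempty)
    (T : ℕ) (ℓ : Fin T → E →ₗ[ℝ] ℝ)
    (x : Fin T → E)
    (β : Fin T → ℝ) (hβ : ∀ t, 0 ≤ β t)
    (s : Fin T → E)
    (hs : ∀ t, ∀ z : E, g z ≥ g (x t) + ⟪s t, z - x t⟫) :
    (∑ t, (ℓ t (x t) + (if 0 < g (x t) then β t else 0) * ⟪s t, x t⟫))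
        - sInf ((fun x' => ∑ t, (ℓ t x' + (if 0 < g (x t) then β t else 0) * ⟪s t, x'⟫)) '' X)
      ≥ ((∑ t, ℓ t (x t)) - sInf ((fun x' => ∑ t, ℓ t x') '' (X ∩ {x | g x ≤ 0})))
        + ∑ t ∈ Finset.univ.filter (fun t => 0 < g (x t)), β t * g (x t) := by
  set w : Fin T → ℝ := fun t => if 0 < g (x t) then β t else 0
  have hw : ∀ t, 0 ≤ w t := fun t => by unfold w; split_ifs <;> simp [hβ t]
  have hℓ : ∀ t, Continuous (ℓ t) := fun t => (ℓ t).continuous_of_finiteDimensional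
  have hbdd : BddBelow ((fun x' => ∑ t, (ℓ t x' + w t * ⟪s t, x'⟫)) '' X) :=
    (hXcomp.image (by fun_prop)).bddBelow
  have hinf := csInf_image_le_csInf_image_add (L := fun x' => ∑ t, ℓ t x')
    (c := ∑ t, w t * (⟪s t, x t⟫ - g (x t))) hbdd hXg Set.inter_subset_left
    fun y hy => by
      rw [Finset.sum_add_distrib]
      exact add_le_add_right (sum_mul_inner_le_of_subgradient _ hw hs hy.2) _
  have hviolation : ∑ t ∈ Finset.univ.filter (fun t => 0 < g (x t)), β t * g (x t)
      = ∑ t, w t * g (x t) := by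
    simp only [Finset.sum_filter, w, ite_mul, zero_mul]
  simp only [mul_sub, Finset.sum_sub_distrib] at hinf
  rw [hviolation, Finset.sum_add_distrib]
  linarith

/-- Lagrangian-relaxation construction. The regret with respect to the
penalized losses ℓ̃_⋄^t is at least the regret against the constrained set X_g plus
the accumulated weighted constraint violations. -/
theorem lagrangian_relaxation_regret_lower_bound
    {E : Type*} [NormedAddCommGroup E] [InnerProductSpace ℝ E] [FiniteDimensional ℝ E]
    (X : Set E) (hXne : X.Nonempty) (hXconv : Convex ℝ X) (hXcomp : IsCompact X)
    (g : E → ℝ) (hg : ConvexOn ℝ Set.univ g)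
    (hXg : (X ∩ {x | g x ≤ 0}).Nonempty)
    (T : ℕ) (ℓ : Fin T → E →ₗ[ℝ] ℝ)
    (x : Fin T → E) (hx : ∀ t, x t ∈ X)
    (β : Fin T → ℝ) (hβ : ∀ t, 0 ≤ β t)
    (s : Fin T → E)
    (hs : ∀ t, ∀ z : E, g z ≥ g (x t) + ⟪s t, z - x t⟫) :
    (∑ t, (ℓ t (x t) + (if 0 < g (x t) then β t else 0) * ⟪s t, x t⟫))
        - sInf ((fun x' => ∑ t, (ℓ t x' + (if 0 < g (x t) then β t else 0) * ⟪s t, x'⟫)) '' X)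
      ≥ ((∑ t, ℓ t (x t)) - sInf ((fun x' => ∑ t, ℓ t x') '' (X ∩ {x | g x ≤ 0})))
        + ∑ t ∈ Finset.univ.filter (fun t => 0 < g (x t)), β t * g (x t) :=
  lagrangian_relaxation_regret_lower_bound_general X hXcomp g hXg T ℓ x β hβ s hs
end

section
/- Under the setting of the Lagrangian-relaxation construction (X convex compact, g convex with X_g = X ∩ {g ≤ 0} nonempty, linear losses ℓ^t, decisions x^t ∈ X, penalties β^t ≥ 0 with B := β^1 + ⋯ + β^T > 0, subgradients s^t of g at x^t, β_⋄^t = β^t if g(x^t) > 0 else 0, and ℓ̃_⋄^t(x) = ℓ^t(x) + β_⋄^t ⟨s^t, x⟩), let R := Σ_{t=1}^T ℓ̃_⋄^t(x^t) − min_{x̂ ∈ X} Σ_{t=1}^T ℓ̃_⋄^t(x̂) be the cumulative regret with respect to the penalized losses. Then the weighted average decision x̄ = (1/B) Σ_{t=1}^T β^t x^t satisfies max{0, g(x̄)} ≤ (1/B) ( R + min_{x̂ ∈ X_g} Σ_{t=1}^T ℓ^t(x̂ − x^t) ). -/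
/-!
Positive parts of `g` are convex, so by Jensen `B · max{0, g(x̄)}` is at most
`Σ_t β^t max{0, g(x^t)} = Σ_t β_⋄^t g(x^t)`. For a feasible `x̂`, the subgradient inequality gives
`g(x^t) ≤ g(x^t) - g(x̂) ≤ ⟨s^t, x^t - x̂⟩`, and `Σ_t β_⋄^t ⟨s^t, x^t - x̂⟩` is exactly the gap
`Σ_t ℓ̃_⋄^t(x^t) - Σ_t ℓ̃_⋄^t(x̂)` (at most the regret `R`) plus `Σ_t ℓ^t(x̂ - x^t)`.
-/

open RealInnerProductSpace Set

theorem ConvexOn.max_zero_map_weighted_average_le {ι E : Type*} [AddCommGroup E] [Module ℝ E]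
    {g : E → ℝ} (hg : ConvexOn ℝ univ g) {S : Finset ι} {w : ι → ℝ} {p : ι → E}
    (hw : ∀ i ∈ S, 0 ≤ w i) (hW : 0 < ∑ i ∈ S, w i) :
    max 0 (g ((1 / ∑ i ∈ S, w i) • ∑ i ∈ S, w i • p i))
      ≤ (1 / ∑ i ∈ S, w i) * ∑ i ∈ S, w i * max 0 (g (p i)) := by
  have hpos : ConvexOn ℝ univ fun z => max 0 (g z) := (convexOn_const 0 convex_univ).sup hg
  simpa [Finset.centerMass, Finset.mul_sum, one_div] using
    hpos.map_centerMass_le hw hW (fun i _ => mem_univ (p i))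

theorem mul_max_zero_eq_ite_mul {α : Type*} [Ring α] [LinearOrder α] (b a : α) :
    b * max 0 a = (if 0 < a then b else 0) * a := by
  split_ifs with ha
  · rw [max_eq_right ha.le]
  · rw [max_eq_left (not_lt.mp ha), mul_zero, zero_mul]

theorem le_inner_sub_of_subgradient_of_nonpos {E : Type*} [NormedAddCommGroup E]
    [InnerProductSpace ℝ E] {g : E → ℝ} {x y s : E} (hs : ∀ z, g z ≥ g x + ⟪s, z - x⟫)
    (hy : g y ≤ 0) : g x ≤ ⟪s, x - y⟫ := by
  have := hs y
  rw [← neg_sub, inner_neg_right] at this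
  linarith

section Regret

variable {ι E : Type*} [Fintype ι]

noncomputable def regret (L : ι → E → ℝ) (X : Set E) (x : ι → E) : ℝ :=
  ∑ t, L t (x t) - sInf ((fun z => ∑ t, L t z) '' X)

theorem sum_sub_sum_le_regret {L : ι → E → ℝ} {X : Set E} (x : ι → E)
    (hbdd : BddBelow ((fun z => ∑ t, L t z) '' X)) {y : E} (hy : y ∈ X) :
    ∑ t, L t (x t) - ∑ t, L t y ≤ regret L X x :=
  sub_le_sub_left (csInf_le hbdd (mem_image_of_mem _ hy)) _

variable [NormedAddCommGroup E] [InnerProductSpace ℝ E]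

theorem sum_mul_inner_sub_eq (ℓ : ι → E →ₗ[ℝ] ℝ) (c : ι → ℝ) (s x : ι → E) (y : E) :
    ∑ t, c t * ⟪s t, x t - y⟫
      = (∑ t, (ℓ t (x t) + c t * ⟪s t, x t⟫) - ∑ t, (ℓ t y + c t * ⟪s t, y⟫))
        + ∑ t, ℓ t (y - x t) := by
  rw [← Finset.sum_sub_distrib, ← Finset.sum_add_distrib]
  refine Finset.sum_congr rfl fun t _ => ?_
  rw [inner_sub_right, map_sub]
  ring

theorem sum_mul_max_zero_le_regret_add {g : E → ℝ} {X : Set E} (ℓ : ι → E →ₗ[ℝ] ℝ)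
    (x s : ι → E) (β : ι → ℝ) (hβ : ∀ t, 0 ≤ β t)
    (hs : ∀ t, ∀ z, g z ≥ g (x t) + ⟪s t, z - x t⟫)
    (hbdd : BddBelow ((fun z => ∑ t, (ℓ t z
      + (if 0 < g (x t) then β t else 0) * ⟪s t, z⟫)) '' X))
    {y : E} (hyX : y ∈ X) (hgy : g y ≤ 0) :
    ∑ t, β t * max 0 (g (x t))
      ≤ regret (fun t z => ℓ t z + (if 0 < g (x t) then β t else 0) * ⟪s t, z⟫) X x
        + ∑ t, ℓ t (y - x t) := by
  set c : ι → ℝ := fun t => if 0 < g (x t) then β t else 0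
  have hc : ∀ t, 0 ≤ c t := fun t => by
    simp only [c]
    split_ifs
    exacts [hβ t, le_rfl]
  calc ∑ t, β t * max 0 (g (x t)) = ∑ t, c t * g (x t) :=
        Finset.sum_congr rfl fun t _ => mul_max_zero_eq_ite_mul _ _
    _ ≤ ∑ t, c t * ⟪s t, x t - y⟫ := Finset.sum_le_sum fun t _ =>
        mul_le_mul_of_nonneg_left (le_inner_sub_of_subgradient_of_nonpos (hs t) hgy) (hc t)
    _ ≤ _ := by
        rw [sum_mul_inner_sub_eq ℓ c s x y]
        gcongr
        exact sum_sub_sum_le_regret x hbdd hyX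

end Regret

theorem lagrangian_relaxation_approximate_feasibility_general
    {E : Type*} [NormedAddCommGroup E] [InnerProductSpace ℝ E] [FiniteDimensional ℝ E]
    (X : Set E) (hXcomp : IsCompact X)
    (g : E → ℝ) (hg : ConvexOn ℝ Set.univ g)
    (hXg : (X ∩ {x | g x ≤ 0}).Nonempty)
    (T : ℕ) (ℓ : Fin T → E →ₗ[ℝ] ℝ)
    (x : Fin T → E)
    (β : Fin T → ℝ) (hβ : ∀ t, 0 ≤ β t) (hB : 0 < ∑ t, β t)
    (s : Fin T → E)
    (hs : ∀ t, ∀ z : E, g z ≥ g (x t) + ⟪s t, z - x t⟫)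
    (R : ℝ)
    (hR : R = (∑ t, (ℓ t (x t) + (if 0 < g (x t) then β t else 0) * ⟪s t, x t⟫))
        - sInf ((fun x' => ∑ t, (ℓ t x'
            + (if 0 < g (x t) then β t else 0) * ⟪s t, x'⟫)) '' X)) :
    max 0 (g ((1 / ∑ t, β t) • ∑ t, β t • x t))
      ≤ (1 / ∑ t, β t)
          * (R + sInf ((fun x' => ∑ t, ℓ t (x' - x t)) '' (X ∩ {x | g x ≤ 0}))) := by
  have hbdd : BddBelow ((fun z => ∑ t, (ℓ t z
      + (if 0 < g (x t) then β t else 0) * ⟪s t, z⟫)) '' X) :=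
    hXcomp.bddBelow_image <| Continuous.continuousOn <| continuous_finsetSum _ fun t _ => by
      have := (ℓ t).continuous_of_finiteDimensional
      fun_prop
  have hviolation : ∑ t, β t * max 0 (g (x t)) - R
      ≤ sInf ((fun x' => ∑ t, ℓ t (x' - x t)) '' (X ∩ {x | g x ≤ 0})) := by
    refine le_csInf (hXg.image _) (forall_mem_image.2 fun y ⟨hyX, hgy⟩ => ?_)
    have := sum_mul_max_zero_le_regret_add ℓ x s β hβ hs hbdd hyX hgy
    rw [hR]
    unfold regret at this
    linarith
  calc max 0 (g ((1 / ∑ t, β t) • ∑ t, β t • x t))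
      ≤ (1 / ∑ t, β t) * ∑ t, β t * max 0 (g (x t)) :=
        hg.max_zero_map_weighted_average_le (fun t _ => hβ t) hB
    _ ≤ _ := by gcongr; linarith

/-- Lagrangian-relaxation construction. The weighted average decision
x̄ = (1/B) Σ_t β^t x^t satisfies max{0, g(x̄)} ≤ (1/B)(R + min_{x̂ ∈ X_g} Σ_t ℓ^t(x̂ − x^t)),
where R is the cumulative regret with respect to the penalized losses. -/
theorem lagrangian_relaxation_approximate_feasibility
    {E : Type*} [NormedAddCommGroup E] [InnerProductSpace ℝ E] [FiniteDimensional ℝ E]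
    (X : Set E) (hXne : X.Nonempty) (hXconv : Convex ℝ X) (hXcomp : IsCompact X)
    (g : E → ℝ) (hg : ConvexOn ℝ Set.univ g)
    (hXg : (X ∩ {x | g x ≤ 0}).Nonempty)
    (T : ℕ) (ℓ : Fin T → E →ₗ[ℝ] ℝ)
    (x : Fin T → E) (hx : ∀ t, x t ∈ X)
    (β : Fin T → ℝ) (hβ : ∀ t, 0 ≤ β t) (hB : 0 < ∑ t, β t)
    (s : Fin T → E)
    (hs : ∀ t, ∀ z : E, g z ≥ g (x t) + ⟪s t, z - x t⟫)
    (R : ℝ)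
    (hR : R = (∑ t, (ℓ t (x t) + (if 0 < g (x t) then β t else 0) * ⟪s t, x t⟫))
        - sInf ((fun x' => ∑ t, (ℓ t x'
            + (if 0 < g (x t) then β t else 0) * ⟪s t, x'⟫)) '' X)) :
    max 0 (g ((1 / ∑ t, β t) • ∑ t, β t • x t))
      ≤ (1 / ∑ t, β t)
          * (R + sInf ((fun x' => ∑ t, ℓ t (x' - x t)) '' (X ∩ {x | g x ≤ 0}))) :=
  lagrangian_relaxation_approximate_feasibility_general X hXcomp g hg hXg T ℓ x β hβ hB s hs R hR
end

section
/- Under the setting of the Lagrangian-relaxation construction (X convex compact, g convex with X_g = X ∩ {g ≤ 0} nonempty, linear losses ℓ^t(x) = ⟨c^t, x⟩, decisions x^t ∈ X, subgradients s^t of g at x^t, β_⋄^t = β^t if g(x^t) > 0 else 0, ℓ̃_⋄^t(x) = ℓ^t(x) + β_⋄^t ⟨s^t, x⟩), assume additionally that ‖c^t‖ ≤ L for all t, that the diameter of X is at most D, and that the constant penalties β^t = κLD are used with κ, L, D > 0. Let R := Σ_{t=1}^T ℓ̃_⋄^t(x^t) − min_{x̂ ∈ X} Σ_{t=1}^T ℓ̃_⋄^t(x̂).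 Then the uniform average x̄ = (1/T) Σ_{t=1}^T x^t satisfies the approximate feasibility bound max{0, g(x̄)} ≤ 1/κ + R/(κLDT). -/
open RealInnerProductSpace

/-!
Fix a feasible point `y ∈ X` with `g y ≤ 0`. Compared with `y`, each round loses at most `L D` on
the linear part `⟪c t, x t - y⟫`, while on a violating round the subgradient inequality gives
`⟪s t, x t - y⟫ ≥ g (x t)`, so the penalty part gains at least `κ L D · max 0 (g (x t))`. Since the
regret `R` dominates the total gap to `y`, we get `κ L D · ∑ max 0 (g (x t)) ≤ R + L D T`, and
Jensen's inequality for the convex function `max 0 ∘ g` passes this to the average `x̄`.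
-/

section

variable {E : Type*} [NormedAddCommGroup E] [InnerProductSpace ℝ E]

lemma neg_mul_le_inner_sub {c p q : E} {L D : ℝ} (hc : ‖c‖ ≤ L) (hpq : ‖p - q‖ ≤ D) :
    -(L * D) ≤ ⟪c, p - q⟫ := by
  have hL : 0 ≤ L := (norm_nonneg c).trans hc
  calc -(L * D) ≤ -(‖c‖ * ‖p - q‖) := neg_le_neg (mul_le_mul hc hpq (norm_nonneg _) hL)
    _ ≤ ⟪c, p - q⟫ := neg_le_of_abs_le (abs_real_inner_le_norm c (p - q))

lemma le_inner_sub_of_subgradient {g : E → ℝ} {s x y : E}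
    (hs : ∀ z, g z ≥ g x + ⟪s, z - x⟫) (hy : g y ≤ 0) : g x ≤ ⟪s, x - y⟫ := by
  have := hs y
  rw [← neg_sub x y, inner_neg_right] at this
  linarith

lemma mul_max_le_switched_penalty {g : E → ℝ} {s x y : E} {β : ℝ} (hβ : 0 ≤ β)
    (hs : ∀ z, g z ≥ g x + ⟪s, z - x⟫) (hy : g y ≤ 0) :
    β * max 0 (g x) ≤ (if 0 < g x then β else 0) * ⟪s, x - y⟫ := by
  split_ifs with hgx
  · rw [max_eq_right hgx.le]
    exact mul_le_mul_of_nonneg_left (le_inner_sub_of_subgradient hs hy) hβ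
  · rw [max_eq_left (not_lt.mp hgx), mul_zero, zero_mul]

lemma ConvexOn.map_uniform_average_le {ι : Type*} [Fintype ι] [Nonempty ι] {S : Set E}
    {f : E → ℝ} (hf : ConvexOn ℝ S f) {x : ι → E} (hx : ∀ i, x i ∈ S) :
    f ((1 / (Fintype.card ι : ℝ)) • ∑ i, x i) ≤ (1 / Fintype.card ι) * ∑ i, f (x i) := by
  have hweights : ∑ _i : ι, (1 / (Fintype.card ι : ℝ)) = 1 := by
    simp [Finset.card_univ]
  have := hf.map_sum_le (t := Finset.univ) (fun _ _ => by positivity) hweights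
    fun i _ => hx i
  simp only [smul_eq_mul, ← Finset.smul_sum, ← Finset.mul_sum] at this
  exact this

end

lemma mul_div_le_inv_add_div {κ L D T M R : ℝ} (hκ : 0 < κ) (hL : 0 < L) (hD : 0 < D) (hT : 0 < T)
    (h : -(L * D) * T + κ * L * D * M ≤ R) : 1 / T * M ≤ 1 / κ + R / (κ * L * D * T) := by
  have hκLD : 0 < κ * L * D := by positivity
  rw [show 1 / κ = L * D * T / (κ * L * D * T) by field_simp, ← add_div,
    show 1 / T * M = κ * L * D * M / (κ * L * D * T) by field_simp]
  gcongr
  linarith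

theorem lagrangian_relaxation_constant_penalty_feasibility_general
    {E : Type*} [NormedAddCommGroup E] [InnerProductSpace ℝ E]
    (X : Set E) (hXcomp : IsCompact X)
    (g : E → ℝ) (hg : ConvexOn ℝ Set.univ g)
    (hXg : (X ∩ {x | g x ≤ 0}).Nonempty)
    (T : ℕ) (hT : 0 < T)
    (c : Fin T → E)
    (x : Fin T → E) (hx : ∀ t, x t ∈ X)
    (s : Fin T → E)
    (hs : ∀ t, ∀ z : E, g z ≥ g (x t) + ⟪s t, z - x t⟫)
    (κ L D : ℝ) (hκ : 0 < κ) (hL : 0 < L) (hD : 0 < D)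
    (hc : ∀ t, ‖c t‖ ≤ L)
    (hdiam : ∀ p ∈ X, ∀ q ∈ X, ‖p - q‖ ≤ D)
    (β : Fin T → ℝ) (hβ : ∀ t, β t = κ * L * D)
    (R : ℝ)
    (hR : R = (∑ t, (⟪c t, x t⟫ + (if 0 < g (x t) then β t else 0) * ⟪s t, x t⟫))
        - sInf ((fun x' => ∑ t, (⟪c t, x'⟫
            + (if 0 < g (x t) then β t else 0) * ⟪s t, x'⟫)) '' X)) :
    max 0 (g ((1 / (T : ℝ)) • ∑ t, x t)) ≤ 1 / κ + R / (κ * L * D * T) := by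
  obtain ⟨y, hyX, hyg⟩ := hXg
  set b : Fin T → ℝ := fun t => if 0 < g (x t) then β t else 0
  set F : E → ℝ := fun x' => ∑ t, (⟪c t, x'⟫ + b t * ⟪s t, x'⟫)
  have hgap : ∀ t, -(L * D) + κ * L * D * max 0 (g (x t))
      ≤ (⟪c t, x t⟫ + b t * ⟪s t, x t⟫) - (⟪c t, y⟫ + b t * ⟪s t, y⟫) := by
    intro t
    have hlin := neg_mul_le_inner_sub (hc t) (hdiam _ (hx t) _ hyX)
    have hpen := mul_max_le_switched_penalty (β := β t) (by rw [hβ t]; positivity) (hs t) hyg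
    rw [inner_sub_right] at hlin hpen
    rw [← hβ t]
    linarith
  have hFy : sInf (F '' X) ≤ ∑ t, (⟪c t, y⟫ + b t * ⟪s t, y⟫) :=
    csInf_le (hXcomp.image (by fun_prop)).bddBelow ⟨y, hyX, rfl⟩
  have hregret : -(L * D) * T + κ * L * D * ∑ t, max 0 (g (x t)) ≤ R := by
    have := Finset.sum_le_sum fun t (_ : t ∈ Finset.univ) => hgap t
    rw [Finset.sum_sub_distrib, Finset.sum_add_distrib, Finset.sum_const, Finset.card_univ,
      Fintype.card_fin, nsmul_eq_mul, ← Finset.mul_sum] at this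
    linarith
  have : Nonempty (Fin T) := ⟨⟨0, hT⟩⟩
  have hjensen := ((convexOn_const 0 convex_univ).sup hg).map_uniform_average_le
    fun t => Set.mem_univ (x t)
  simp only [Fintype.card_fin, Pi.sup_apply] at hjensen
  refine hjensen.trans (mul_div_le_inv_add_div hκ hL hD (by exact_mod_cast hT) ?_)
  linarith

/-- Lagrangian relaxation with constant penalties β^t = κLD. The uniform
average decision satisfies the approximate feasibility bound
max{0, g(x̄)} ≤ 1/κ + R/(κLDT). -/
theorem lagrangian_relaxation_constant_penalty_feasibility
    {E : Type*} [NormedAddCommGroup E] [InnerProductSpace ℝ E] [FiniteDimensional ℝ E]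
    (X : Set E) (hXne : X.Nonempty) (hXconv : Convex ℝ X) (hXcomp : IsCompact X)
    (g : E → ℝ) (hg : ConvexOn ℝ Set.univ g)
    (hXg : (X ∩ {x | g x ≤ 0}).Nonempty)
    (T : ℕ) (hT : 0 < T)
    (c : Fin T → E)
    (x : Fin T → E) (hx : ∀ t, x t ∈ X)
    (s : Fin T → E)
    (hs : ∀ t, ∀ z : E, g z ≥ g (x t) + ⟪s t, z - x t⟫)
    (κ L D : ℝ) (hκ : 0 < κ) (hL : 0 < L) (hD : 0 < D)
    (hc : ∀ t, ‖c t‖ ≤ L)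
    (hdiam : ∀ p ∈ X, ∀ q ∈ X, ‖p - q‖ ≤ D)
    (β : Fin T → ℝ) (hβ : ∀ t, β t = κ * L * D)
    (R : ℝ)
    (hR : R = (∑ t, (⟪c t, x t⟫ + (if 0 < g (x t) then β t else 0) * ⟪s t, x t⟫))
        - sInf ((fun x' => ∑ t, (⟪c t, x'⟫
            + (if 0 < g (x t) then β t else 0) * ⟪s t, x'⟫)) '' X)) :
    max 0 (g ((1 / (T : ℝ)) • ∑ t, x t)) ≤ 1 / κ + R / (κ * L * D * T) :=
  lagrangian_relaxation_constant_penalty_feasibility_general X hXcomp g hg hXg T hT c x hx s hs κ L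
    D hκ hL hD hc hdiam β hβ R hR
end

section
/- Under the setting of the Lagrangian-relaxation construction (X convex compact, g convex with X_g = X ∩ {g ≤ 0} nonempty, linear losses ℓ^t, decisions x^t ∈ X, penalties β^t ≥ 0, subgradients s^t of g at x^t, β_⋄^t = β^t if g(x^t) > 0 else 0, ℓ̃_⋄^t(x) = ℓ^t(x) + β_⋄^t ⟨s^t, x⟩), the regret of the decisions x^t measured against the constrained set X_g is bounded by the regret of the underlying minimizer with respect to the penalized losses: Σ_{t=1}^T ℓ^t(x^t) − min_{x̂ ∈ X_g} Σ_{t=1}^T ℓ^t(x̂) ≤ Σ_{t=1}^T ℓ̃_⋄^t(x^t) − min_{x̂ ∈ X} Σ_{t=1}^T ℓ̃_⋄^t(x̂). In particular, if the right-hand side is o(T) then the decisions are Hannan consistent with respect to {ℓ^t} and X_g. -/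
open RealInnerProductSpace

/-!
On the constrained set `X_g = X ∩ {g ≤ 0}` every penalty term is dominated by its value at the
decision: if `g (x t) > 0` then `g z ≤ 0 < g (x t)`, so the subgradient inequality gives
`⟪s t, z⟫ ≤ ⟪s t, x t⟫`, and otherwise the penalty vanishes. Hence on `X_g` the penalized
cumulative loss is at most the plain one plus the penalty paid by the decisions, and minimizing
the penalized loss over the larger set `X` can only lower it further.
-/

section

variable {E : Type*} [NormedAddCommGroup E] [InnerProductSpace ℝ E]

theorem inner_le_of_subgradient {g : E → ℝ} {s y z : E}
    (hs : ∀ w, g w ≥ g y + ⟪s, w - y⟫) (hz : g z ≤ g y) : ⟪s, z⟫ ≤ ⟪s, y⟫ := by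
  have := hs z
  rw [inner_sub_right] at this
  linarith

theorem ite_mul_inner_le_of_subgradient {g : E → ℝ} {s y z : E} {β : ℝ}
    (hs : ∀ w, g w ≥ g y + ⟪s, w - y⟫) (hβ : 0 ≤ β) (hz : g z ≤ 0) :
    (if 0 < g y then β else 0) * ⟪s, z⟫ ≤ (if 0 < g y then β else 0) * ⟪s, y⟫ := by
  split_ifs with hy
  · exact mul_le_mul_of_nonneg_left (inner_le_of_subgradient hs (hz.trans hy.le)) hβ
  · simp

end

theorem csInf_image_le_csInf_image_add_s13 {α : Type*} {f h : α → ℝ} {A B : Set α} {C : ℝ}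
    (hAB : A ⊆ B) (hA : A.Nonempty) (hh : BddBelow (h '' B))
    (hle : ∀ z ∈ A, h z ≤ f z + C) :
    sInf (h '' B) ≤ sInf (f '' A) + C := by
  rw [← sub_le_iff_le_add]
  refine le_csInf (hA.image f) ?_
  rintro _ ⟨z, hz, rfl⟩
  linarith [csInf_le hh ⟨z, hAB hz, rfl⟩, hle z hz]

theorem lagrangian_relaxation_hannan_consistency_general
    {E : Type*} [NormedAddCommGroup E] [InnerProductSpace ℝ E] [FiniteDimensional ℝ E]
    (X : Set E) (hXcomp : IsCompact X)
    (g : E → ℝ)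
    (hXg : (X ∩ {x | g x ≤ 0}).Nonempty)
    (T : ℕ) (ℓ : Fin T → E →ₗ[ℝ] ℝ)
    (x : Fin T → E)
    (β : Fin T → ℝ) (hβ : ∀ t, 0 ≤ β t)
    (s : Fin T → E)
    (hs : ∀ t, ∀ z : E, g z ≥ g (x t) + ⟪s t, z - x t⟫) :
    (∑ t, ℓ t (x t)) - sInf ((fun x' => ∑ t, ℓ t x') '' (X ∩ {x | g x ≤ 0}))
      ≤ (∑ t, (ℓ t (x t) + (if 0 < g (x t) then β t else 0) * ⟪s t, x t⟫))
        - sInf ((fun x' => ∑ t, (ℓ t x'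
            + (if 0 < g (x t) then β t else 0) * ⟪s t, x'⟫)) '' X) := by
  have hcont : Continuous fun x' =>
      ∑ t, (ℓ t x' + (if 0 < g (x t) then β t else 0) * ⟪s t, x'⟫) :=
    continuous_finsetSum _ fun t _ => (ℓ t).continuous_of_finiteDimensional.add
      (continuous_const.mul (continuous_const.inner continuous_id))
  have hmin := csInf_image_le_csInf_image_add_s13 (f := fun x' => ∑ t, ℓ t x')
    (C := ∑ t, (if 0 < g (x t) then β t else 0) * ⟪s t, x t⟫)
    Set.inter_subset_left hXg (hXcomp.image hcont).bddBelow fun z hz => by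
      rw [← Finset.sum_add_distrib]
      exact Finset.sum_le_sum fun t _ =>
        add_le_add_right (ite_mul_inner_le_of_subgradient (hs t) (hβ t) hz.2) _
  rw [Finset.sum_add_distrib]
  linarith

/-- Lagrangian-relaxation construction. The regret of the decisions
measured against the constrained set X_g is bounded by the regret of the underlying
minimizer with respect to the penalized losses (Hannan consistency transfer). -/
theorem lagrangian_relaxation_hannan_consistency
    {E : Type*} [NormedAddCommGroup E] [InnerProductSpace ℝ E] [FiniteDimensional ℝ E]
    (X : Set E) (hXne : X.Nonempty) (hXconv : Convex ℝ X) (hXcomp : IsCompact X)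
    (g : E → ℝ) (hg : ConvexOn ℝ Set.univ g)
    (hXg : (X ∩ {x | g x ≤ 0}).Nonempty)
    (T : ℕ) (ℓ : Fin T → E →ₗ[ℝ] ℝ)
    (x : Fin T → E) (hx : ∀ t, x t ∈ X)
    (β : Fin T → ℝ) (hβ : ∀ t, 0 ≤ β t)
    (s : Fin T → E)
    (hs : ∀ t, ∀ z : E, g z ≥ g (x t) + ⟪s t, z - x t⟫) :
    (∑ t, ℓ t (x t)) - sInf ((fun x' => ∑ t, ℓ t x') '' (X ∩ {x | g x ≤ 0}))
      ≤ (∑ t, (ℓ t (x t) + (if 0 < g (x t) then β t else 0) * ⟪s t, x t⟫))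
        - sInf ((fun x' => ∑ t, (ℓ t x'
            + (if 0 < g (x t) then β t else 0) * ⟪s t, x'⟫)) '' X) :=
  lagrangian_relaxation_hannan_consistency_general X hXcomp g hXg T ℓ x β hβ s hs
end

section
/- Let X be a nonempty convex compact subset and Y a closed convex subset of a finite-dimensional real inner product space E with X ∩ Y ≠ ∅. Let ℓ^1,…,ℓ^T : E → ℝ be linear functions, let d : E → ℝ be differentiable and μ-strongly convex (μ > 0), let x^1,…,x^T ∈ X, and let z^1,…,z^T ∈ X ∩ Y satisfy the first-order optimality condition ⟨∇d(x^t) − ∇d(z^t), x̂ − z^t⟩ ≤ 0 for all x̂ ∈ X ∩ Y and all t. Let α^1,…,α^T ≥ 0 satisfy (1/μ) Σ_{t=1}^T ℓ^t(z^t − x^t) ≤ Σ_{t=1}^T α^t ‖z^t − x^t‖², and define the modified linear losses ℓ̃^t(x) = ℓ^t(x) + α^t ⟨∇d(x^t) − ∇d(z^t), x⟩. Then the cumulative regret on X ∩ Y of the projected decisions z^t is bounded by the regret of the underlying minimizer on X with respect to the modified losses: Σ_{t=1}^T ℓ^t(z^t) − min_{x̂ ∈ X ∩ Y} Σ_{t=1}^T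 ℓ^t(x̂) ≤ Σ_{t=1}^T ℓ̃^t(x^t) − min_{x̂ ∈ X} Σ_{t=1}^T ℓ̃^t(x̂). -/
/-!
For every comparator `x̂ ∈ X ∩ Y` the optimality condition of `zᵗ` and strong monotonicity of `∇d`
give `μ ‖zᵗ - xᵗ‖² ≤ ⟪∇d(xᵗ) - ∇d(zᵗ), xᵗ - x̂⟫`. Weighting by `αᵗ` and summing, the hypothesis on
the `αᵗ` turns this into `∑ ℓᵗ(zᵗ - xᵗ) ≤ ∑ αᵗ ⟪∇d(xᵗ) - ∇d(zᵗ), xᵗ - x̂⟫`, which rearranges to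
`∑ ℓᵗ(zᵗ) - ∑ ℓᵗ(x̂) ≤ ∑ ℓ̃ᵗ(xᵗ) - ∑ ℓ̃ᵗ(x̂)`. Taking the infimum over `x̂`, and bounding
`∑ ℓ̃ᵗ(x̂)` below by its infimum over the larger compact set `X`, gives the regret bound.
-/

open RealInnerProductSpace

section Gradient

variable {E : Type*} [NormedAddCommGroup E] [InnerProductSpace ℝ E] [CompleteSpace E]

theorem ConvexOn.inner_gradient_le_sub {f : E → ℝ} {Df : E → E}
    (hconv : ConvexOn ℝ Set.univ f) (hf : ∀ p, HasGradientAt f (Df p) p) (a b : E) :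
    ⟪Df a, b - a⟫ ≤ f b - f a := by
  set c : ℝ →ᵃ[ℝ] E := AffineMap.lineMap a b
  have hfc : HasDerivAt (f ∘ c) ⟪Df (c 0), b - a⟫ 0 := by
    simpa [InnerProductSpace.toDual_apply_apply] using
      (hasGradientAt_iff_hasFDerivAt.1 (hf (c 0))).comp_hasDerivAt 0 AffineMap.hasDerivAt_lineMap
  have hslope := (hconv.comp_affineMap c).le_slope_of_hasDerivAt (Set.mem_univ 0) (Set.mem_univ 1)
    one_pos hfc
  simpa [slope, c] using hslope

theorem ConvexOn.inner_gradient_sub_nonneg {f : E → ℝ} {Df : E → E}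
    (hconv : ConvexOn ℝ Set.univ f) (hf : ∀ p, HasGradientAt f (Df p) p) (a b : E) :
    0 ≤ ⟪Df a - Df b, a - b⟫ := by
  have hab := hconv.inner_gradient_le_sub hf a b
  have hba := hconv.inner_gradient_le_sub hf b a
  rw [← neg_sub a b, inner_neg_right] at hab
  rw [inner_sub_left]
  linarith

theorem HasGradientAt.sub_mul_norm_sq {f : E → ℝ} {f' : E} {p : E} (hf : HasGradientAt f f' p)
    (c : ℝ) : HasGradientAt (fun q => f q - c / 2 * ‖q‖ ^ 2) (f' - c • p) p := by
  rw [hasGradientAt_iff_hasFDerivAt] at hf ⊢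
  refine (hf.sub ((hasStrictFDerivAt_norm_sq p).hasFDerivAt.const_mul (c / 2))).congr_fderiv ?_
  ext q
  simp only [sub_apply, InnerProductSpace.toDual_apply_apply,
    smul_apply, coe_innerSL_apply, nsmul_eq_mul, Nat.cast_ofNat, smul_eq_mul,
    map_sub, map_smul, sub_right_inj]
  ring

theorem mul_norm_sub_sq_le_inner_gradient_sub {d : E → ℝ} {Dd : E → E} {μ : ℝ}
    (hd : ∀ p, HasGradientAt d (Dd p) p)
    (hstrong : ConvexOn ℝ Set.univ (fun p => d p - μ / 2 * ‖p‖ ^ 2)) (a b : E) :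
    μ * ‖a - b‖ ^ 2 ≤ ⟪Dd a - Dd b, a - b⟫ := by
  have h := hstrong.inner_gradient_sub_nonneg (fun p => (hd p).sub_mul_norm_sq μ) a b
  rwa [sub_sub_sub_comm, ← smul_sub, inner_sub_left, real_inner_smul_left,
    real_inner_self_eq_norm_sq, sub_nonneg] at h

/-- `hopt` is the optimality condition of `z` as the Bregman projection of `x` onto a convex set
containing `y`. -/
theorem mul_norm_sub_sq_le_inner_of_inner_le_zero {d : E → ℝ} {Dd : E → E} {μ : ℝ}
    (hd : ∀ p, HasGradientAt d (Dd p) p)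
    (hstrong : ConvexOn ℝ Set.univ (fun p => d p - μ / 2 * ‖p‖ ^ 2)) {x z y : E}
    (hopt : ⟪Dd x - Dd z, y - z⟫ ≤ 0) :
    μ * ‖z - x‖ ^ 2 ≤ ⟪Dd x - Dd z, x - y⟫ := by
  have h := mul_norm_sub_sq_le_inner_gradient_sub hd hstrong x z
  rw [norm_sub_rev] at h
  have hsplit : x - y = (x - z) - (y - z) := by abel
  rw [hsplit, inner_sub_right]
  linarith

end Gradient

theorem sub_sInf_image_le_sub_sInf_image {α : Type*} {S X : Set α} {F G : α → ℝ} {a b : ℝ}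
    (hS : S.Nonempty) (hSX : S ⊆ X) (hG : BddBelow (G '' X))
    (h : ∀ y ∈ S, a + G y ≤ b + F y) :
    a - sInf (F '' S) ≤ b - sInf (G '' X) := by
  suffices sInf (G '' X) + a - b ≤ sInf (F '' S) by linarith
  refine le_csInf (hS.image F) ?_
  rintro _ ⟨y, hy, rfl⟩
  linarith [h y hy, csInf_le hG ⟨y, hSX hy, rfl⟩]

theorem intersection_regret_bound_general
    {E : Type*} [NormedAddCommGroup E] [InnerProductSpace ℝ E] [FiniteDimensional ℝ E]
    (X Y : Set E)
    (hXcomp : IsCompact X)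
    (hXY : (X ∩ Y).Nonempty)
    (T : ℕ) (ℓ : Fin T → E →ₗ[ℝ] ℝ)
    (μ : ℝ) (hμ : 0 < μ)
    (d : E → ℝ) (Dd : E → E) (hd : ∀ p : E, HasGradientAt d (Dd p) p)
    (hstrong : ConvexOn ℝ Set.univ (fun p => d p - μ / 2 * ‖p‖ ^ 2))
    (x : Fin T → E)
    (z : Fin T → E)
    (hopt : ∀ t, ∀ x' ∈ X ∩ Y, ⟪Dd (x t) - Dd (z t), x' - z t⟫ ≤ 0)
    (α : Fin T → ℝ) (hα : ∀ t, 0 ≤ α t)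
    (hcond : (1 / μ) * ∑ t, ℓ t (z t - x t) ≤ ∑ t, α t * ‖z t - x t‖ ^ 2) :
    (∑ t, ℓ t (z t)) - sInf ((fun x' => ∑ t, ℓ t x') '' (X ∩ Y))
      ≤ (∑ t, (ℓ t (x t) + α t * ⟪Dd (x t) - Dd (z t), x t⟫))
        - sInf ((fun x' => ∑ t, (ℓ t x' + α t * ⟪Dd (x t) - Dd (z t), x'⟫)) '' X) := by
  have hloss_le : ∑ t, ℓ t (z t - x t) ≤ ∑ t, μ * (α t * ‖z t - x t‖ ^ 2) := by
    rw [← Finset.mul_sum, ← div_le_iff₀' hμ, div_eq_inv_mul, ← one_div]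
    exact hcond
  have hcont : Continuous fun x' => ∑ t, (ℓ t x' + α t * ⟪Dd (x t) - Dd (z t), x'⟫) := by
    fun_prop
  refine sub_sInf_image_le_sub_sInf_image hXY Set.inter_subset_left
    (hXcomp.image hcont).bddBelow fun y hy => ?_
  have hstep : ∑ t, ℓ t (z t - x t) ≤ ∑ t, α t * ⟪Dd (x t) - Dd (z t), x t - y⟫ :=
    hloss_le.trans <| Finset.sum_le_sum fun t _ => by
      rw [mul_left_comm]
      exact mul_le_mul_of_nonneg_left
        (mul_norm_sub_sq_le_inner_of_inner_le_zero hd hstrong (hopt t y hy)) (hα t)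
  simp only [map_sub, inner_sub_right, mul_sub, Finset.sum_sub_distrib] at hstep
  simp only [Finset.sum_add_distrib]
  linarith

/-- Projection-based intersection construction. The cumulative regret on
X ∩ Y of the projected decisions z^t is bounded by the regret of the underlying
minimizer on X with respect to the modified linear losses
ℓ̃^t(x) = ℓ^t(x) + α^t ⟨∇d(x^t) − ∇d(z^t), x⟩. -/
theorem intersection_regret_bound
    {E : Type*} [NormedAddCommGroup E] [InnerProductSpace ℝ E] [FiniteDimensional ℝ E]
    (X Y : Set E)
    (hXne : X.Nonempty) (hXconv : Convex ℝ X) (hXcomp : IsCompact X)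
    (hYclosed : IsClosed Y) (hYconv : Convex ℝ Y)
    (hXY : (X ∩ Y).Nonempty)
    (T : ℕ) (ℓ : Fin T → E →ₗ[ℝ] ℝ)
    (μ : ℝ) (hμ : 0 < μ)
    (d : E → ℝ) (Dd : E → E) (hd : ∀ p : E, HasGradientAt d (Dd p) p)
    (hstrong : ConvexOn ℝ Set.univ (fun p => d p - μ / 2 * ‖p‖ ^ 2))
    (x : Fin T → E) (hx : ∀ t, x t ∈ X)
    (z : Fin T → E) (hz : ∀ t, z t ∈ X ∩ Y)
    (hopt : ∀ t, ∀ x' ∈ X ∩ Y, ⟪Dd (x t) - Dd (z t), x' - z t⟫ ≤ 0)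
    (α : Fin T → ℝ) (hα : ∀ t, 0 ≤ α t)
    (hcond : (1 / μ) * ∑ t, ℓ t (z t - x t) ≤ ∑ t, α t * ‖z t - x t‖ ^ 2) :
    (∑ t, ℓ t (z t)) - sInf ((fun x' => ∑ t, ℓ t x') '' (X ∩ Y))
      ≤ (∑ t, (ℓ t (x t) + α t * ⟪Dd (x t) - Dd (z t), x t⟫))
        - sInf ((fun x' => ∑ t, (ℓ t x' + α t * ⟪Dd (x t) - Dd (z t), x'⟫)) '' X) :=
  intersection_regret_bound_general X Y hXcomp hXY T ℓ μ hμ d Dd hd hstrong x z hopt α hα hcond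
end

section
/- Let E be a finite-dimensional real inner product space and let d : E → ℝ be differentiable, μ-strongly convex (μ > 0), and β-smooth (∇d is Lipschitz continuous with constant β). Let ℓ : E → ℝ be a linear function, let x, z ∈ E with x ≠ z, let α = max{0, ℓ(z − x) / (μ‖z − x‖²)}, and define the linear function ℓ̃(w) = ℓ(w) + α ⟨∇d(x) − ∇d(z), w⟩. Then the operator norm of ℓ̃ satisfies ‖ℓ̃‖ ≤ (1 + β/μ) ‖ℓ‖; in particular, when β ≥ 1 this yields the paper's bound ‖ℓ̃‖ ≤ (β(1+μ)/μ) ‖ℓ‖, so the intersection construction dilates the loss functions by at most a constant factor. -/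
open RealInnerProductSpace

/-! By Cauchy–Schwarz the penalization coefficient satisfies `α ‖z - x‖ ≤ ‖c‖ / μ`, and the
Lipschitz bound on the gradient gives `α ‖∇d x - ∇d z‖ ≤ β α ‖z - x‖ ≤ (β / μ) ‖c‖`; the
triangle inequality finishes. -/

lemma max_zero_inner_div_mul_norm_le {E : Type*} [NormedAddCommGroup E] [InnerProductSpace ℝ E]
    {μ : ℝ} (hμ : 0 ≤ μ) (c v : E) :
    max 0 (⟪c, v⟫ / (μ * ‖v‖ ^ 2)) * ‖v‖ ≤ ‖c‖ / μ := by
  rcases eq_or_ne v 0 with rfl | hv0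
  · simp only [norm_zero, mul_zero]
    positivity
  have hv : ‖v‖ ≠ 0 := norm_ne_zero_iff.mpr hv0
  rw [max_mul_of_nonneg _ _ (norm_nonneg v), zero_mul, max_le_iff]
  refine ⟨by positivity, ?_⟩
  calc ⟪c, v⟫ / (μ * ‖v‖ ^ 2) * ‖v‖ = ⟪c, v⟫ / ‖v‖ / μ := by
        rw [div_mul_eq_mul_div, div_div, pow_two, ← mul_assoc, mul_div_mul_right _ _ hv,
          mul_comm]
    _ ≤ ‖c‖ * ‖v‖ / ‖v‖ / μ := by gcongr; exact real_inner_le_norm c v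
    _ = ‖c‖ / μ := by rw [mul_div_cancel_right₀ _ hv]

lemma one_add_div_le_mul_one_add_div {μ β : ℝ} (hμ : 0 < μ) (hβ : 1 ≤ β) :
    1 + β / μ ≤ β * (1 + μ) / μ := by
  rw [mul_one_add, add_div, mul_div_cancel_right₀ _ hμ.ne', add_comm]
  gcongr

theorem intersection_loss_dilation_bound_general
    {E : Type*} [NormedAddCommGroup E] [InnerProductSpace ℝ E]
    (μ β : ℝ) (hμ : 0 < μ)
    (Dd : E → E)
    (hsmooth : ∀ p q : E, ‖Dd p - Dd q‖ ≤ β * ‖p - q‖)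
    (c : E) (x z : E) (hxz : x ≠ z)
    (α : ℝ) (hα : α = max 0 (⟪c, z - x⟫ / (μ * ‖z - x‖ ^ 2))) :
    ‖c + α • (Dd x - Dd z)‖ ≤ (1 + β / μ) * ‖c‖
      ∧ (1 ≤ β → ‖c + α • (Dd x - Dd z)‖ ≤ β * (1 + μ) / μ * ‖c‖) := by
  have hα0 : 0 ≤ α := hα ▸ le_max_left _ _
  have hαle : α * ‖z - x‖ ≤ ‖c‖ / μ := hα ▸ max_zero_inner_div_mul_norm_le hμ.le c (z - x)
  have hlip : ‖Dd x - Dd z‖ ≤ β * ‖z - x‖ := norm_sub_rev z x ▸ hsmooth x z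
  have hβ0 : 0 ≤ β := nonneg_of_mul_nonneg_left ((norm_nonneg _).trans hlip)
    (norm_pos_iff.mpr (sub_ne_zero.mpr hxz.symm))
  have hmain : ‖c + α • (Dd x - Dd z)‖ ≤ (1 + β / μ) * ‖c‖ :=
    calc ‖c + α • (Dd x - Dd z)‖ ≤ ‖c‖ + α * ‖Dd x - Dd z‖ :=
        (norm_add_le _ _).trans_eq (by rw [norm_smul, Real.norm_of_nonneg hα0])
      _ ≤ ‖c‖ + α * (β * ‖z - x‖) := by gcongr
      _ = ‖c‖ + β * (α * ‖z - x‖) := by ring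
      _ ≤ ‖c‖ + β * (‖c‖ / μ) := by gcongr
      _ = (1 + β / μ) * ‖c‖ := by ring
  exact ⟨hmain, fun hβ => hmain.trans
    (mul_le_mul_of_nonneg_right (one_add_div_le_mul_one_add_div hμ hβ) (norm_nonneg c))⟩

/-- The modified loss ℓ̃(w) = ⟨c, w⟩ + α ⟨∇d(x) − ∇d(z), w⟩ of the
projection-based intersection construction, with the deterministic penalization
coefficient α, has operator norm (i.e. the norm of its representing vector) at most
(1 + β/μ)‖c‖; in particular, when β ≥ 1 this yields ‖ℓ̃‖ ≤ (β(1+μ)/μ)‖c‖. -/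
theorem intersection_loss_dilation_bound
    {E : Type*} [NormedAddCommGroup E] [InnerProductSpace ℝ E] [FiniteDimensional ℝ E]
    (μ β : ℝ) (hμ : 0 < μ)
    (d : E → ℝ) (Dd : E → E) (hd : ∀ p : E, HasGradientAt d (Dd p) p)
    (hstrong : ConvexOn ℝ Set.univ (fun p => d p - μ / 2 * ‖p‖ ^ 2))
    (hsmooth : ∀ p q : E, ‖Dd p - Dd q‖ ≤ β * ‖p - q‖)
    (c : E) (x z : E) (hxz : x ≠ z)
    (α : ℝ) (hα : α = max 0 (⟪c, z - x⟫ / (μ * ‖z - x‖ ^ 2))) :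
    ‖c + α • (Dd x - Dd z)‖ ≤ (1 + β / μ) * ‖c‖
      ∧ (1 ≤ β → ‖c + α • (Dd x - Dd z)‖ ≤ β * (1 + μ) / μ * ‖c‖) :=
  intersection_loss_dilation_bound_general μ β hμ Dd hsmooth c x z hxz α hα
end
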